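/- For every non-negative integer L, \(\sum_{j=-\infty}^{\infty} (-1)^j q^{j^2} \left(\frac{j+1}{3}\right) \binom{2L+1}{L+j}_{q^2} = \frac{(q^3;q^6)_L}{(q;q^2)_{L+1}}\,(1-q^{2(1+2L)})\). The sum is finite since the q-binomial coefficient vanishes for |j| > L+1. -/

import Mathlib

open Finset

/-- The finite q-Pochhammer symbol `(a;q)_n`. -/
noncomputable def qPoch (a q : RatFunc ℚ) (n : ℕ) : RatFunc ℚ :=
  ∏ k ∈ Finset.range n, (1 - a * q ^ k)

/-- The q-binomial coefficient `[top choose bot]_q`, zero unless `0 ≤ bot ≤ top`. -/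
noncomputable def qBinom (q : RatFunc ℚ) (top bot : ℤ) : RatFunc ℚ :=
  if 0 ≤ bot ∧ bot ≤ top then
    qPoch q q top.toNat / (qPoch q q bot.toNat * qPoch q q (top - bot).toNat)
  else 0

/-- The Legendre symbol modulo 3. -/
def leg3 (j : ℤ) : ℤ := if j % 3 = 1 then 1 else if j % 3 = 2 then -1 else 0

/-- `1/(q;q)_k`, with the convention that it is zero for negative `k`. -/
noncomputable def invPoch (q : RatFunc ℚ) (k : ℤ) : RatFunc ℚ :=
  if 0 ≤ k then (qPoch q q k.toNat)⁻¹ else 0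

/-- The generic variable `q` in the field of rational functions. -/
noncomputable def Xq : RatFunc ℚ := RatFunc.X

/-!
Write `w_r(j) = (-1)^j q^{j²} ((j+r)/3)`, `T_r(L) = ∑_j w_r(j) [2L, L+j]_{q²}` and
`S_r(L) = ∑_j w_r(j) [2L+1, L+j]_{q²}`, so that the left-hand side is `S_1(L)`.
Reflecting `j ↦ -j` in the symmetric coefficient `[2L, L+j]` gives `T_r = -T_{-r}`, hence
`T_0 = 0` and `T_2 = -T_1`. Pascal's rule for `[2L+1, L+j]`, followed by the shift `j ↦ j+1`,
gives `S_r = T_r - q^{2L+1} T_{r+1}`, so `S_1 = (1 + q^{2L+1}) T_1` and `S_0 = -q^{2L+1} T_1`.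
The other Pascal rule for `[2L+2, L+1+j]` gives `T_1(L+1) = S_1(L) - q^{2L+1} S_0(L)
= (1 + q^{2L+1} + q^{4L+2}) T_1(L)`. Hence `T_1(L) = ∏_{k<L} (1 - q^{6k+3}) / (1 - q^{2k+1})`,
which is the right-hand side divided by `1 + q^{2L+1}`.
-/

lemma qPoch_succ (a q : RatFunc ℚ) (n : ℕ) :
    qPoch a q (n + 1) = qPoch a q n * (1 - a * q ^ n) :=
  prod_range_succ _ _

lemma qPoch_cube (a q : RatFunc ℚ) (n : ℕ) :
    qPoch (a ^ 3) (q ^ 3) n =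
      qPoch a q n * ∏ k ∈ range n, (1 + a * q ^ k + (a * q ^ k) ^ 2) := by
  rw [qPoch, qPoch, ← prod_mul_distrib]
  exact prod_congr rfl fun k _ => by ring

section QBinom

variable {q : RatFunc ℚ}

lemma qBinom_eq_zero_of_notMem_Icc {n k : ℤ} (hk : k ∉ Set.Icc 0 n) : qBinom q n k = 0 :=
  if_neg hk

/- Since `invPoch` vanishes at negative arguments, this form of the q-binomial coefficient
satisfies the Pascal rules below for every `k : ℤ` without case distinctions. -/
lemma qBinom_eq_mul_invPoch (n : ℕ) (k : ℤ) :
    qBinom q n k = qPoch q q n * invPoch q k * invPoch q (n - k) := by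
  unfold qBinom invPoch
  split_ifs <;> first | omega | (simp only [Int.toNat_natCast]; ring) | simp

lemma qBinom_symm (n : ℕ) (k : ℤ) : qBinom q n k = qBinom q n (n - k) := by
  rw [qBinom_eq_mul_invPoch, qBinom_eq_mul_invPoch, sub_sub_cancel, mul_assoc, mul_assoc,
    mul_comm (invPoch q k)]

lemma invPoch_eq_mul_invPoch_add_one (hq : ∀ m : ℕ, q ^ (m + 1) ≠ 1) (k : ℤ) :
    invPoch q k = (1 - q ^ (k + 1)) * invPoch q (k + 1) := by
  obtain hk | rfl | hk : k < -1 ∨ k = -1 ∨ 0 ≤ k := by omega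
  · simp [invPoch, show ¬ 0 ≤ k by omega, show ¬ 0 ≤ k + 1 by omega]
  · simp [invPoch]
  · lift k to ℕ using hk
    rw [invPoch, invPoch, if_pos (by omega), if_pos (by omega), Int.toNat_natCast,
      show ((k : ℤ) + 1).toNat = k + 1 by omega, qPoch_succ, ← pow_succ', mul_inv,
      mul_left_comm, ← Nat.cast_succ, zpow_natCast, mul_inv_cancel₀ (sub_ne_zero.2 (hq k).symm),
      mul_one]

lemma qBinom_succ (hq0 : q ≠ 0) (hq : ∀ m : ℕ, q ^ (m + 1) ≠ 1) (n : ℕ) (k : ℤ) :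
    qBinom q (n + 1 : ℕ) k = qBinom q n k + q ^ ((n : ℤ) + 1 - k) * qBinom q n (k - 1) := by
  have hk := invPoch_eq_mul_invPoch_add_one hq (k - 1)
  have hnk := invPoch_eq_mul_invPoch_add_one hq ((n : ℤ) - k)
  have hpow : q ^ ((n : ℤ) + 1 - k) * q ^ k = q ^ (n + 1) := by
    rw [← zpow_add₀ hq0, sub_add_cancel, ← Nat.cast_succ, zpow_natCast]
  rw [sub_add_cancel] at hk
  rw [show (n : ℤ) - k + 1 = n + 1 - k by ring] at hnk
  rw [qBinom_eq_mul_invPoch, qBinom_eq_mul_invPoch, qBinom_eq_mul_invPoch, hk, hnk, qPoch_succ,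
    ← pow_succ', show ((n + 1 : ℕ) : ℤ) - k = n + 1 - k by push_cast; ring,
    show (n : ℤ) - (k - 1) = n + 1 - k by ring]
  linear_combination (qPoch q q n * invPoch q k * invPoch q (n + 1 - k)) * hpow

lemma qBinom_succ' (hq0 : q ≠ 0) (hq : ∀ m : ℕ, q ^ (m + 1) ≠ 1) (n : ℕ) (k : ℤ) :
    qBinom q (n + 1 : ℕ) k = q ^ k * qBinom q n k + qBinom q n (k - 1) := by
  have hk := invPoch_eq_mul_invPoch_add_one hq (k - 1)
  have hnk := invPoch_eq_mul_invPoch_add_one hq ((n : ℤ) - k)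
  have hpow : q ^ k * q ^ ((n : ℤ) + 1 - k) = q ^ (n + 1) := by
    rw [← zpow_add₀ hq0, add_sub_cancel, ← Nat.cast_succ, zpow_natCast]
  rw [sub_add_cancel] at hk
  rw [show (n : ℤ) - k + 1 = n + 1 - k by ring] at hnk
  rw [qBinom_eq_mul_invPoch, qBinom_eq_mul_invPoch, qBinom_eq_mul_invPoch, hk, hnk, qPoch_succ,
    ← pow_succ', show ((n + 1 : ℕ) : ℤ) - k = n + 1 - k by push_cast; ring,
    show (n : ℤ) - (k - 1) = n + 1 - k by ring]
  linear_combination (qPoch q q n * invPoch q k * invPoch q (n + 1 - k)) * hpow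

end QBinom

noncomputable def binomSum (q : RatFunc ℚ) (n : ℕ) (w : ℤ → RatFunc ℚ) : RatFunc ℚ :=
  ∑ᶠ k, w k * qBinom q n k

section BinomSum

variable {q : RatFunc ℚ} {n : ℕ}

lemma hasFiniteSupport_mul_qBinom_sub (w : ℤ → RatFunc ℚ) (c : ℤ) :
    Function.HasFiniteSupport (fun k => w k * qBinom q n (k - c)) := by
  refine (Set.finite_Icc c (n + c)).subset fun k hk => ?_
  by_contra h
  have : k - c ∉ Set.Icc 0 (n : ℤ) := by simp only [Set.mem_Icc] at h ⊢; omega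
  simp [qBinom_eq_zero_of_notMem_Icc this] at hk

lemma binomSum_const_mul (c : RatFunc ℚ) (w : ℤ → RatFunc ℚ) :
    binomSum q n (fun k => c * w k) = c * binomSum q n w := by
  simp only [binomSum, mul_finsum, mul_assoc]

lemma binomSum_reflect (w : ℤ → RatFunc ℚ) :
    binomSum q n w = binomSum q n (fun k => w (n - k)) := by
  rw [binomSum, binomSum, ← finsum_comp_equiv (Equiv.subLeft (n : ℤ))]
  simp only [Equiv.subLeft_apply, ← qBinom_symm]

lemma finsum_mul_qBinom_sub_one (v : ℤ → RatFunc ℚ) :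
    ∑ᶠ k, v k * qBinom q n (k - 1) = binomSum q n (fun k => v (k + 1)) := by
  rw [binomSum, ← finsum_comp_equiv (Equiv.addRight 1) (f := fun k => v k * qBinom q n (k - 1))]
  simp only [Equiv.coe_addRight, add_sub_cancel_right]

lemma binomSum_zero (w : ℤ → RatFunc ℚ) : binomSum q 0 w = w 0 := by
  rw [binomSum, finsum_eq_single _ 0 fun k hk => ?_]
  · simp [qBinom, qPoch]
  · rw [qBinom_eq_zero_of_notMem_Icc (by simpa using hk), mul_zero]

lemma binomSum_succ (hq0 : q ≠ 0) (hq : ∀ m : ℕ, q ^ (m + 1) ≠ 1) (w : ℤ → RatFunc ℚ) :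
    binomSum q (n + 1) w =
      binomSum q n w + binomSum q n (fun k => q ^ ((n : ℤ) - k) * w (k + 1)) := by
  calc binomSum q (n + 1) w
      = ∑ᶠ k, (w k * qBinom q n (k - 0) +
          q ^ ((n : ℤ) + 1 - k) * w k * qBinom q n (k - 1)) :=
        finsum_congr fun k => by rw [qBinom_succ hq0 hq, sub_zero]; ring
    _ = binomSum q n w +
          binomSum q n (fun k => q ^ ((n : ℤ) + 1 - (k + 1)) * w (k + 1)) := by
        rw [finsum_add_distrib (hasFiniteSupport_mul_qBinom_sub _ 0)
          (hasFiniteSupport_mul_qBinom_sub _ 1), finsum_mul_qBinom_sub_one]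
        simp only [binomSum, sub_zero]
    _ = _ := by simp only [add_sub_add_right_eq_sub]

lemma binomSum_succ' (hq0 : q ≠ 0) (hq : ∀ m : ℕ, q ^ (m + 1) ≠ 1) (w : ℤ → RatFunc ℚ) :
    binomSum q (n + 1) w =
      binomSum q n (fun k => q ^ k * w k) + binomSum q n (fun k => w (k + 1)) := by
  calc binomSum q (n + 1) w
      = ∑ᶠ k, (q ^ k * w k * qBinom q n (k - 0) + w k * qBinom q n (k - 1)) :=
        finsum_congr fun k => by rw [qBinom_succ' hq0 hq, sub_zero]; ring
    _ = _ := by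
        rw [finsum_add_distrib (hasFiniteSupport_mul_qBinom_sub _ 0)
          (hasFiniteSupport_mul_qBinom_sub _ 1), finsum_mul_qBinom_sub_one]
        simp only [binomSum, sub_zero]

lemma binomSum_comp_sub_eq_sum_Icc (w : ℤ → RatFunc ℚ) {m a b : ℤ} (ha : a ≤ -m)
    (hb : n - m ≤ b) :
    binomSum q n (fun k => w (k - m)) = ∑ j ∈ Icc a b, w j * qBinom q n (m + j) := by
  rw [binomSum, ← finsum_comp_equiv (Equiv.addLeft m)]
  simp only [Equiv.coe_addLeft, add_sub_cancel_left]
  refine finsum_eq_finsetSum_of_support_subset _ fun j hj => ?_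
  by_contra h
  have : m + j ∉ Set.Icc 0 (n : ℤ) := by simp only [coe_Icc, Set.mem_Icc] at h ⊢; omega
  simp [qBinom_eq_zero_of_notMem_Icc this] at hj

end BinomSum

lemma Xq_ne_zero : Xq ≠ 0 := RatFunc.X_ne_zero

lemma Xq_pow_ne_one {m : ℕ} (hm : m ≠ 0) : Xq ^ m ≠ 1 := by
  have : (Polynomial.X ^ m : Polynomial ℚ) ≠ 1 := fun h =>
    hm (by simpa using congrArg Polynomial.natDegree h)
  simpa [Xq, RatFunc.algebraMap_X] using (RatFunc.algebraMap_injective ℚ).ne this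

lemma Xq_sq_pow_ne_one (m : ℕ) : (Xq ^ 2) ^ (m + 1) ≠ 1 := by
  rw [← pow_mul]; exact Xq_pow_ne_one (by omega)

lemma Xq_zpow_two_mul_add_one (L : ℕ) : Xq ^ (2 * (L : ℤ) + 1) = Xq ^ (2 * L + 1) := by
  norm_cast

lemma qPoch_Xq_ne_zero (n : ℕ) : qPoch Xq (Xq ^ 2) n ≠ 0 :=
  prod_ne_zero_iff.2 fun k _ => by
    rw [← pow_mul, ← pow_succ']; exact sub_ne_zero.2 (Xq_pow_ne_one (by omega)).symm

lemma leg3_neg (j : ℤ) : leg3 (-j) = -leg3 j := by unfold leg3; split_ifs <;> omega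

lemma leg3_add_three (j : ℤ) : leg3 (j + 3) = leg3 j := by unfold leg3; split_ifs <;> omega

noncomputable def legWeight (r j : ℤ) : RatFunc ℚ :=
  (-1 : RatFunc ℚ) ^ j * Xq ^ (j ^ 2) * (leg3 (j + r) : RatFunc ℚ)

lemma legWeight_neg (r j : ℤ) : legWeight r (-j) = -legWeight (-r) j := by
  simp only [legWeight, neg_one_zpow_eq_ite, even_neg, neg_sq,
    show -j + r = -(j + -r) by ring, leg3_neg, Int.cast_neg]
  ring

lemma legWeight_add_three (r : ℤ) : legWeight (r + 3) = legWeight r := by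
  ext j
  rw [legWeight, legWeight, ← add_assoc, leg3_add_three]

lemma legWeight_succ_mul (r j L : ℤ) :
    (Xq ^ 2) ^ (L - j) * legWeight r (j + 1) = -Xq ^ (2 * L + 1) * legWeight (r + 1) j := by
  have hX : Xq ^ (2 * (L - j)) * Xq ^ ((j + 1) ^ 2) = Xq ^ (2 * L + 1) * Xq ^ (j ^ 2) := by
    rw [← zpow_add₀ Xq_ne_zero, ← zpow_add₀ Xq_ne_zero]; ring_nf
  rw [legWeight, legWeight, ← zpow_natCast, ← zpow_mul, zpow_add_one₀ (by norm_num),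
    mul_neg_one, add_right_comm, add_assoc j]
  push_cast
  linear_combination (-(-1 : RatFunc ℚ) ^ j * (leg3 (j + (r + 1)) : RatFunc ℚ)) * hX

lemma legWeight_pred_mul (r j L : ℤ) :
    (Xq ^ 2) ^ (L + j) * legWeight r (j - 1) = -Xq ^ (2 * L + 1) * legWeight (r - 1) j := by
  rw [show L + j = L - -j by ring, show j - 1 = -(-j + 1) by ring, legWeight_neg, mul_neg,
    legWeight_succ_mul, legWeight_neg, show -(-r + 1) = r - 1 by ring]
  ring

/- `legSum r (2 * L) L` and `legSum r (2 * L + 1) L` are `T_r(L)` and `S_r(L)`, summed over the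
bottom index `k = L + j`. -/
noncomputable def legSum (r : ℤ) (n L : ℕ) : RatFunc ℚ :=
  binomSum (Xq ^ 2) n fun k => legWeight r (k - L)

section LegSum

variable (L : ℕ)

lemma legSum_two_mul_eq_neg (r : ℤ) : legSum r (2 * L) L = -legSum (-r) (2 * L) L := by
  rw [legSum, binomSum_reflect, legSum, ← neg_one_mul, ← binomSum_const_mul]
  congr 1
  funext k
  rw [show ((2 * L : ℕ) : ℤ) - k - L = -(k - L) by push_cast; ring, legWeight_neg, neg_one_mul]

lemma legSum_zero_two_mul : legSum 0 (2 * L) L = 0 := by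
  have h := legSum_two_mul_eq_neg L 0
  rw [neg_zero] at h
  exact self_eq_neg.1 h

lemma legSum_two_two_mul : legSum 2 (2 * L) L = -legSum 1 (2 * L) L := by
  rw [legSum_two_mul_eq_neg, legSum, legSum, show (-2 : ℤ) = 1 + -3 by norm_num,
    ← legWeight_add_three]
  norm_num

lemma legSum_two_mul_add_one (r : ℤ) :
    legSum r (2 * L + 1) L =
      legSum r (2 * L) L - Xq ^ (2 * (L : ℤ) + 1) * legSum (r + 1) (2 * L) L := by
  rw [legSum, binomSum_succ (pow_ne_zero _ Xq_ne_zero) Xq_sq_pow_ne_one, sub_eq_add_neg,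
    ← neg_mul, legSum, legSum, ← binomSum_const_mul]
  congr 2
  funext k
  rw [show ((2 * L : ℕ) : ℤ) - k = L - (k - L) by push_cast; ring,
    show k + 1 - L = k - L + 1 by ring, legWeight_succ_mul]

lemma legSum_one_two_mul_add_one :
    legSum 1 (2 * L + 1) L = (1 + Xq ^ (2 * (L : ℤ) + 1)) * legSum 1 (2 * L) L := by
  rw [legSum_two_mul_add_one, show (1 : ℤ) + 1 = 2 by norm_num, legSum_two_two_mul]
  ring

lemma legSum_zero_two_mul_add_one :
    legSum 0 (2 * L + 1) L = -(Xq ^ (2 * (L : ℤ) + 1) * legSum 1 (2 * L) L) := by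
  rw [legSum_two_mul_add_one, legSum_zero_two_mul, zero_add, zero_sub]

lemma legSum_one_two_mul_succ :
    legSum 1 (2 * (L + 1)) (L + 1) =
      (1 + Xq ^ (2 * (L : ℤ) + 1) + (Xq ^ (2 * (L : ℤ) + 1)) ^ 2) * legSum 1 (2 * L) L := by
  have hfirst : (fun k : ℤ => (Xq ^ 2) ^ k * legWeight 1 (k - (L + 1 : ℕ))) =
      fun k => -Xq ^ (2 * (L : ℤ) + 1) * legWeight 0 (k - L) := by
    funext k
    rw [show k = L + (k - L) by ring,
      show (L : ℤ) + (k - L) - (L + 1 : ℕ) = k - L - 1 by push_cast; ring,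
      legWeight_pred_mul, add_sub_cancel_left, sub_self]
  have hsecond :
      (fun k : ℤ => legWeight 1 (k + 1 - (L + 1 : ℕ))) = fun k => legWeight 1 (k - L) := by
    funext k
    push_cast
    ring_nf
  rw [legSum, show 2 * (L + 1) = 2 * L + 1 + 1 by ring,
    binomSum_succ' (pow_ne_zero _ Xq_ne_zero) Xq_sq_pow_ne_one, hfirst, hsecond, binomSum_const_mul]
  change -Xq ^ (2 * (L : ℤ) + 1) * legSum 0 (2 * L + 1) L + legSum 1 (2 * L + 1) L = _
  rw [legSum_zero_two_mul_add_one, legSum_one_two_mul_add_one]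
  ring

lemma legSum_one_two_mul :
    legSum 1 (2 * L) L = ∏ k ∈ range L, (1 + Xq ^ (2 * k + 1) + (Xq ^ (2 * k + 1)) ^ 2) := by
  induction L with
  | zero => simp [legSum, binomSum_zero, legWeight, leg3]
  | succ L ih =>
    rw [legSum_one_two_mul_succ, ih, prod_range_succ, Xq_zpow_two_mul_add_one, mul_comm]

end LegSum

lemma qPoch_cube_div_qPoch (L : ℕ) :
    qPoch (Xq ^ 3) (Xq ^ 6) L / qPoch Xq (Xq ^ 2) (L + 1) * (1 - Xq ^ (2 * (1 + 2 * L))) =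
      (1 + Xq ^ (2 * L + 1)) *
        ∏ k ∈ range L, (1 + Xq ^ (2 * k + 1) + (Xq ^ (2 * k + 1)) ^ 2) := by
  have hlast : (1 : RatFunc ℚ) - Xq ^ (2 * L + 1) ≠ 0 :=
    sub_ne_zero.2 (Xq_pow_ne_one (by omega)).symm
  rw [show (Xq : RatFunc ℚ) ^ 6 = (Xq ^ 2) ^ 3 by ring, qPoch_cube, qPoch_succ]
  simp only [← pow_mul, ← pow_succ']
  field_simp [qPoch_Xq_ne_zero L, hlast]
  ring

/-- Theorem 2.3: for `L ≥ 0`,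
`∑_j (-1)^j q^{j²} ((j+1)/3) [2L+1 choose L+j]_{q²} = ((q³;q⁶)_L/(q;q²)_{L+1}) (1-q^{2(1+2L)})`.
The sum is taken over `-(L+1) ≤ j ≤ L+1`, which covers all nonzero terms. -/
theorem statement8 (L : ℕ) :
    ∑ j ∈ Finset.Icc (-(L : ℤ) - 1) ((L : ℤ) + 1),
      (-1 : RatFunc ℚ) ^ j * Xq ^ (j ^ 2) * (leg3 (j + 1) : RatFunc ℚ) *
        qBinom (Xq ^ 2) (2 * L + 1) ((L : ℤ) + j) =
    qPoch (Xq ^ 3) (Xq ^ 6) L / qPoch Xq (Xq ^ 2) (L + 1) * (1 - Xq ^ (2 * (1 + 2 * L))) := by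
  have hsum := binomSum_comp_sub_eq_sum_Icc (q := Xq ^ 2) (n := 2 * L + 1) (legWeight 1)
    (m := L) (a := -L - 1) (b := L + 1) (by omega) (by push_cast; omega)
  push_cast at hsum
  calc _ = legSum 1 (2 * L + 1) L := hsum.symm
    _ = _ := by
      rw [legSum_one_two_mul_add_one, legSum_one_two_mul, Xq_zpow_two_mul_add_one,
        qPoch_cube_div_qPoch]
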